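/- arXiv:2403.09184 — 2 statements merged into one kernel-verified Lean document; each statement's English description precedes it below -/
import Mathlib

section
/- Let M = (S, Act, A, Δ) be a finite MDP, T ⊆ S a target set, K a set of state-action pairs of M, and M' = (S', Act', A', Δ') any MDP with K ⊆ S'×A' that coincides with M on K and contains T, i.e. (i) A(s) = A'(s) for all s occurring in K, (ii) Δ(s,a) = Δ'(s,a) for all (s,a) ∈ K, and (iii) T ⊆ S'. Let π be a strategy on M, s ∈ S ∩ S', N ∈ ℕ, and let π' be any strategy on M' that agrees with π on all finite paths whose state-action pairs all lie in K. Then P^π_{M,s}[◇^{≤N} T] ≥ P^{π'}_{M',s}[◇^{≤N} T] − P^π_{M,s}[◇^{≤N} K̄], where ◇^{≤N} K̄ is the event that within the first N steps some state-action pair not in K is taken. -/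
/-!
STATEMENT 13: Bounded reachability on similar MDPs. If M and M' coincide on a set K
of state-action pairs, π is a strategy on M and π' a strategy on M' agreeing with π
on all finite paths whose state-action pairs lie in K, then
P^π_{M,s}[◇^{≤N} T] ≥ P^{π'}_{M',s}[◇^{≤N} T] − P^π_{M,s}[◇^{≤N} K̄].
-/

open Finset
open scoped Classical

/-- A finite MDP. -/
structure MDP (S A : Type) [Fintype S] [DecidableEq S] [Fintype A] [DecidableEq A] where
  act : S → Finset A
  act_ne : ∀ s, (act s).Nonempty
  P : S → A → S → ℝ
  P_nonneg : ∀ s a s', 0 ≤ P s a s'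
  P_sum : ∀ s, ∀ a ∈ act s, ∑ s', P s a s' = 1

variable {S A : Type} [Fintype S] [DecidableEq S] [Fintype A] [DecidableEq A]

/-- A (general, history-dependent) strategy: maps the history of state-action pairs
taken so far and the current state to a probability distribution over the available
actions. -/
def IsHStrat (M : MDP S A) (π : List (S × A) → S → A → ℝ) : Prop :=
  (∀ h s a, 0 ≤ π h s a) ∧
  (∀ h s a, π h s a ≠ 0 → a ∈ M.act s) ∧
  (∀ h s, ∑ a ∈ M.act s, π h s a = 1)

/-- `N`-step bounded reachability probability of `T` under a history-dependent
strategy, starting from history `h` and current state `s`. -/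
noncomputable def reachH (M : MDP S A) (π : List (S × A) → S → A → ℝ) (T : Set S) :
    ℕ → List (S × A) → S → ℝ
  | 0, _, s => if s ∈ T then 1 else 0
  | N + 1, h, s => if s ∈ T then 1
      else ∑ a ∈ M.act s, π h s a * ∑ s', M.P s a s' * reachH M π T N (h ++ [(s, a)]) s'

/-- Probability, within `N` steps, of taking some state-action pair outside `K`
(the event `◇^{≤N} K̄`). -/
noncomputable def leaveH (M : MDP S A) (π : List (S × A) → S → A → ℝ)
    (K : Set (S × A)) : ℕ → List (S × A) → S → ℝ
  | 0, _, _ => 0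
  | N + 1, h, s => ∑ a ∈ M.act s, π h s a *
      (if (s, a) ∈ K then ∑ s', M.P s a s' * leaveH M π K N (h ++ [(s, a)]) s' else 1)

lemma reachH_nonneg (M : MDP S A) (π : List (S × A) → S → A → ℝ)
    (hπ0 : ∀ h s a, 0 ≤ π h s a) (T : Set S) :
    ∀ N h s, 0 ≤ reachH M π T N h s := by
  intro N
  induction N with
  | zero => intro h s; rw [reachH]; split <;> norm_num
  | succ N ih =>
    intro h s
    rw [reachH]; split
    · norm_num
    · refine Finset.sum_nonneg fun a _ => mul_nonneg (hπ0 _ _ _) ?_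
      exact Finset.sum_nonneg fun s' _ => mul_nonneg (M.P_nonneg _ _ _) (ih _ _)

lemma reachH_le_one (M : MDP S A) (π : List (S × A) → S → A → ℝ)
    (hπ : IsHStrat M π) (T : Set S) :
    ∀ N h s, reachH M π T N h s ≤ 1 := by
  intro N
  induction N with
  | zero => intro h s; rw [reachH]; split <;> norm_num
  | succ N ih =>
    intro h s
    rw [reachH]; split
    · exact le_refl 1
    · calc ∑ a ∈ M.act s, π h s a * ∑ s', M.P s a s' * reachH M π T N (h ++ [(s, a)]) s'
          ≤ ∑ a ∈ M.act s, π h s a * 1 := by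
            refine Finset.sum_le_sum fun a ha => mul_le_mul_of_nonneg_left ?_ (hπ.1 _ _ _)
            calc ∑ s', M.P s a s' * reachH M π T N (h ++ [(s, a)]) s'
                ≤ ∑ s', M.P s a s' * 1 :=
                  Finset.sum_le_sum fun s' _ =>
                    mul_le_mul_of_nonneg_left (ih _ _) (M.P_nonneg _ _ _)
              _ = 1 := by simpa using M.P_sum s a ha
        _ = 1 := by simpa using hπ.2.2 h s

lemma leaveH_nonneg (M : MDP S A) (π : List (S × A) → S → A → ℝ)
    (hπ0 : ∀ h s a, 0 ≤ π h s a) (K : Set (S × A)) :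
    ∀ N h s, 0 ≤ leaveH M π K N h s := by
  intro N
  induction N with
  | zero => intro h s; rw [leaveH]
  | succ N ih =>
    intro h s
    rw [leaveH]
    refine Finset.sum_nonneg fun a _ => mul_nonneg (hπ0 _ _ _) ?_
    split
    · exact Finset.sum_nonneg fun s' _ => mul_nonneg (M.P_nonneg _ _ _) (ih _ _)
    · norm_num

lemma key_lemma (M M' : MDP S A) (T : Set S) (K : Set (S × A))
    (hP : ∀ p ∈ K, ∀ s', M.P p.1 p.2 s' = M'.P p.1 p.2 s')
    (π π' : List (S × A) → S → A → ℝ)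
    (hπ : IsHStrat M π) (hπ' : IsHStrat M' π')
    (hagree : ∀ h : List (S × A), (∀ p ∈ h, p ∈ K) → ∀ s a, π h s a = π' h s a) :
    ∀ N (h : List (S × A)), (∀ p ∈ h, p ∈ K) → ∀ s,
      reachH M' π' T N h s - leaveH M π K N h s ≤ reachH M π T N h s := by
  intro N
  induction N with
  | zero =>
    intro h hK s
    rw [reachH, reachH, leaveH]
    split <;> norm_num
  | succ N ih =>
    intro h hK s
    rw [reachH, reachH, leaveH]
    by_cases hsT : s ∈ T
    · rw [if_pos hsT, if_pos hsT]
      have hnn : 0 ≤ ∑ a ∈ M.act s, π h s a *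
          (if (s, a) ∈ K then ∑ s', M.P s a s' * leaveH M π K N (h ++ [(s, a)]) s' else 1) := by
        refine Finset.sum_nonneg fun a _ => mul_nonneg (hπ.1 _ _ _) ?_
        split
        · exact Finset.sum_nonneg fun s' _ =>
            mul_nonneg (M.P_nonneg _ _ _) (leaveH_nonneg M π hπ.1 K N _ s')
        · norm_num
      linarith
    · rw [if_neg hsT, if_neg hsT]
      -- extend all sums to univ
      have hext : ∀ (f : A → ℝ),
          ∑ a ∈ M.act s, π h s a * f a = ∑ a, π h s a * f a := by
        intro f
        refine Finset.sum_subset (Finset.subset_univ _) fun a _ ha => ?_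
        have : π h s a = 0 := by
          by_contra hne; exact ha (hπ.2.1 _ _ _ hne)
        simp [this]
      have hext' : ∀ (f : A → ℝ),
          ∑ a ∈ M'.act s, π' h s a * f a = ∑ a, π' h s a * f a := by
        intro f
        refine Finset.sum_subset (Finset.subset_univ _) fun a _ ha => ?_
        have : π' h s a = 0 := by
          by_contra hne; exact ha (hπ'.2.1 _ _ _ hne)
        simp [this]
      rw [hext, hext, hext']
      rw [← Finset.sum_sub_distrib]
      refine Finset.sum_le_sum fun a _ => ?_
      have hpp : π h s a = π' h s a := hagree h hK s a
      rw [← hpp, ← mul_sub]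
      rcases eq_or_lt_of_le (hπ.1 h s a) with h0 | hpos
      · simp [← h0]
      refine mul_le_mul_of_nonneg_left ?_ (le_of_lt hpos)
      by_cases hsa : (s, a) ∈ K
      · rw [if_pos hsa]
        have hK' : ∀ p ∈ h ++ [(s, a)], p ∈ K := by
          intro p hp
          rcases List.mem_append.mp hp with hp | hp
          · exact hK p hp
          · simp at hp; subst hp; exact hsa
        have hPa : ∀ s', M'.P s a s' = M.P s a s' :=
          fun s' => (hP (s, a) hsa s').symm
        simp_rw [hPa]
        rw [← Finset.sum_sub_distrib]
        refine Finset.sum_le_sum fun s' _ => ?_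
        rw [← mul_sub]
        exact mul_le_mul_of_nonneg_left (ih _ hK' s') (M.P_nonneg _ _ _)
      · rw [if_neg hsa]
        have ha' : a ∈ M'.act s := by
          refine hπ'.2.1 h s a ?_
          rw [← hpp]; exact ne_of_gt hpos
        have h1 : ∑ s', M'.P s a s' * reachH M' π' T N (h ++ [(s, a)]) s' ≤ 1 := by
          calc ∑ s', M'.P s a s' * reachH M' π' T N (h ++ [(s, a)]) s'
              ≤ ∑ s', M'.P s a s' * 1 :=
                Finset.sum_le_sum fun s' _ =>
                  mul_le_mul_of_nonneg_left (reachH_le_one M' π' hπ' T N _ s')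
                    (M'.P_nonneg _ _ _)
            _ = 1 := by simpa using M'.P_sum s a ha'
        have h2 : 0 ≤ ∑ s', M.P s a s' * reachH M π T N (h ++ [(s, a)]) s' :=
          Finset.sum_nonneg fun s' _ =>
            mul_nonneg (M.P_nonneg _ _ _) (reachH_nonneg M π hπ.1 T N _ s')
        linarith

/-- Bounded reachability in two MDPs coinciding on `K`, under strategies agreeing on
all histories inside `K`. -/
theorem similar_mdp_bound (M M' : MDP S A) (T : Set S) (K : Set (S × A))
    (hact : ∀ p ∈ K, M.act p.1 = M'.act p.1)
    (hP : ∀ p ∈ K, ∀ s', M.P p.1 p.2 s' = M'.P p.1 p.2 s')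
    (π π' : List (S × A) → S → A → ℝ)
    (hπ : IsHStrat M π) (hπ' : IsHStrat M' π')
    (hagree : ∀ h : List (S × A), (∀ p ∈ h, p ∈ K) → ∀ s a, π h s a = π' h s a)
    (s : S) (N : ℕ) :
    reachH M' π' T N [] s - leaveH M π K N [] s ≤ reachH M π T N [] s := by
  exact key_lemma M M' T K hP π π' hπ hπ' hagree N [] (by simp) s
end

section
/- Let M = (S, Act, A, Δ) be a finite MDP with target set T ⊆ S, and let Lo, Up : {(s,a) : s ∈ S, a ∈ A(s)} → [0,1] satisfy Lo(s,a) ≤ val_T(s,a) ≤ Up(s,a) for all state-action pairs. Let U be any set of state-action pairs and define updated bounds by Up'(s,a) = Σ_{s'} Δ(s,a,s') · max_{a' ∈ A(s')} Up(s',a') and Lo'(s,a) = Σ_{s'} Δ(s,a,s') · max_{a' ∈ A(s')} Lo(s',a') for (s,a) ∈ U with s ∉ T, Up'(s,a) = Lo'(s,a) = 1 for (s,a) ∈ U with s ∈ T, and Up' = Up, Lo' = Lo on all other pairs. Then Lo'(s,a) ≤ val_T(s,a) ≤ Up'(s,a) for all state-action pairs (s,a). -/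
/-!
STATEMENT 16: Correctness of Bellman bound updates. If `Lo ≤ val_T ≤ Up` on all
state-action pairs and the bounds of the pairs in a set `U` are updated by a Bellman
backup (setting them to 1 on target states), then the updated bounds still satisfy
`Lo' ≤ val_T ≤ Up'` on all state-action pairs.
-/

open Finset
open scoped Classical

/-- `IsValue act hne P T v` states that `v` is the value function for reaching `T`:
the least fixed point of the Bellman operator in the pointwise order on `[0,1]^S`. -/
def IsValue {σ α : Type*} [Fintype σ] [DecidableEq σ] (act : σ → Finset α)
    (hne : ∀ s, (act s).Nonempty) (P : σ → α → σ → ℝ) (T : Finset σ) (v : σ → ℝ) :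
    Prop :=
  (∀ s, 0 ≤ v s ∧ v s ≤ 1) ∧
  (∀ s, v s = if s ∈ T then 1 else (act s).sup' (hne s) fun a => ∑ s', P s a s' * v s') ∧
  (∀ w : σ → ℝ, (∀ s, 0 ≤ w s ∧ w s ≤ 1) →
    (∀ s, w s = if s ∈ T then 1 else (act s).sup' (hne s) fun a => ∑ s', P s a s' * w s') →
    ∀ s, v s ≤ w s)

variable {S A : Type} [Fintype S] [DecidableEq S] [Fintype A] [DecidableEq A]

/-- The state-action value `val_T(s,a)`: equal to 1 on target states and otherwise
the expected state value of the successors. -/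
noncomputable def qval (M : MDP S A) (T : Finset S) (v : S → ℝ) (s : S) (a : A) : ℝ :=
  if s ∈ T then 1 else ∑ s', M.P s a s' * v s'

/-- Bellman updates of correct lower and upper bounds on the state-action values
remain correct. -/
theorem bound_update_correct (M : MDP S A) (T : Finset S) (v : S → ℝ)
    (hv : IsValue M.act M.act_ne M.P T v)
    (Lo Up : S → A → ℝ)
    (hLo01 : ∀ s, ∀ a ∈ M.act s, 0 ≤ Lo s a ∧ Lo s a ≤ 1)
    (hUp01 : ∀ s, ∀ a ∈ M.act s, 0 ≤ Up s a ∧ Up s a ≤ 1)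
    (hLo : ∀ s, ∀ a ∈ M.act s, Lo s a ≤ qval M T v s a)
    (hUp : ∀ s, ∀ a ∈ M.act s, qval M T v s a ≤ Up s a)
    (U : Set (S × A)) (Lo' Up' : S → A → ℝ)
    (hUp' : ∀ s a, Up' s a =
      if (s, a) ∈ U then
        (if s ∈ T then 1
          else ∑ s', M.P s a s' * (M.act s').sup' (M.act_ne s') fun a' => Up s' a')
      else Up s a)
    (hLo' : ∀ s a, Lo' s a =
      if (s, a) ∈ U then
        (if s ∈ T then 1
          else ∑ s', M.P s a s' * (M.act s').sup' (M.act_ne s') fun a' => Lo s' a')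
      else Lo s a) :
    ∀ s, ∀ a ∈ M.act s, Lo' s a ≤ qval M T v s a ∧ qval M T v s a ≤ Up' s a := by

  obtain ⟨hv01, hvfix, -⟩ := hv
  have hq : ∀ s, ∀ a ∈ M.act s, qval M T v s a ≤ v s := by
    intro s a ha
    rw [qval, hvfix s]
    split_ifs with hT
    · simp
    · exact Finset.le_sup' (fun a => ∑ s', M.P s a s' * v s') ha
  have hvUp : ∀ s', v s' ≤ (M.act s').sup' (M.act_ne s') fun a' => Up s' a' := by
    intro s'
    rw [hvfix s']
    split_ifs with hT
    · obtain ⟨a', ha'⟩ := M.act_ne s'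
      refine le_trans ?_ (Finset.le_sup' (fun a' => Up s' a') ha')
      have := hUp s' a' ha'
      rwa [qval, if_pos hT] at this
    · apply Finset.sup'_le
      intro a' ha'
      refine le_trans ?_ (Finset.le_sup' (fun a' => Up s' a') ha')
      have := hUp s' a' ha'
      rwa [qval, if_neg hT] at this
  have hvLo : ∀ s', ((M.act s').sup' (M.act_ne s') fun a' => Lo s' a') ≤ v s' := by
    intro s'
    apply Finset.sup'_le
    intro a' ha'
    refine le_trans (hLo s' a' ha') ?_
    by_cases hT : s' ∈ T
    · rw [qval, if_pos hT, hvfix s', if_pos hT]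
    · exact hq s' a' ha'
  intro s a ha
  rw [hLo' s a, hUp' s a]
  by_cases hU : (s,a) ∈ U
  · rw [if_pos hU, if_pos hU]
    by_cases hT : s ∈ T
    · rw [if_pos hT, if_pos hT, qval, if_pos hT]; simp
    · rw [if_neg hT, if_neg hT, qval, if_neg hT]
      constructor
      · exact Finset.sum_le_sum fun s' _ => mul_le_mul_of_nonneg_left (hvLo s') (M.P_nonneg s a s')
      · exact Finset.sum_le_sum fun s' _ => mul_le_mul_of_nonneg_left (hvUp s') (M.P_nonneg s a s')
  · rw [if_neg hU, if_neg hU]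
    exact ⟨hLo s a ha, hUp s a ha⟩
end
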